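/- (Null-structure estimate.) For every m ≥ 0 there is a constant C > 0 with the following property. Let θ₁, θ₂ ∈ {+1,−1}, let ω, ω′ ∈ ℝ³ be unit vectors, let r₁, r₂ > 0 (with the additional requirement r₁ ≥ 1 and r₂ ≥ 1 when m > 0), and let δ > 0 satisfy |θ₁ω − θ₂ω′| ≤ δ, r₁⁻¹ ≤ 2¹⁰δ and r₂⁻¹ ≤ 2¹⁰δ. Then for all vectors v, w ∈ ℂ⁴, |⟨Π_{θ₁}ᵐ(r₁ω) v, β Π_{θ₂}ᵐ(r₂ω′) w⟩_{ℂ⁴}| ≤ C·δ·|v|·|w|, where ⟨·,·⟩_{ℂ⁴} is the standard Hermitian inner product on ℂ⁴ and |·| the associated norm. -/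

import Mathlib

noncomputable section
open Matrix Complex MeasureTheory

/-- ℝ³ with the Euclidean norm. -/
abbrev E3 := EuclideanSpace ℝ (Fin 3)

/-- The Dirac matrix β = [[I₂,0],[0,−I₂]]. -/
def diracBeta : Matrix (Fin 4) (Fin 4) ℂ :=
  !![1,0,0,0; 0,1,0,0; 0,0,-1,0; 0,0,0,-1]

/-- The Dirac matrices αʲ = [[0,σʲ],[σʲ,0]] built from the Pauli matrices. -/
def diracAlpha : Fin 3 → Matrix (Fin 4) (Fin 4) ℂ :=
  ![!![0,0,0,1; 0,0,1,0; 0,1,0,0; 1,0,0,0],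
    !![0,0,0,-Complex.I; 0,0,Complex.I,0; 0,-Complex.I,0,0; Complex.I,0,0,0],
    !![0,0,1,0; 0,0,0,-1; 1,0,0,0; 0,-1,0,0]]

/-- ξ·α = ξ₁α¹ + ξ₂α² + ξ₃α³. -/
def xiAlpha (ξ : E3) : Matrix (Fin 4) (Fin 4) ℂ := ∑ j, (ξ j : ℂ) • diracAlpha j

/-- The Dirac symbol ξ·α + mβ. -/
def diracSym (m : ℝ) (ξ : E3) : Matrix (Fin 4) (Fin 4) ℂ :=
  xiAlpha ξ + (m : ℂ) • diracBeta

/-- ⟨ξ⟩ₘ = (m² + |ξ|²)^(1/2). -/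
def bracket (m : ℝ) (ξ : E3) : ℝ := Real.sqrt (m ^ 2 + ‖ξ‖ ^ 2)

/-- The projection Π_θᵐ(ξ) = (1/2)[I₄ + θ⟨ξ⟩ₘ⁻¹(ξ·α + mβ)], for θ = ±1. -/
def proj (m θ : ℝ) (ξ : E3) : Matrix (Fin 4) (Fin 4) ℂ :=
  (1/2 : ℂ) • ((1 : Matrix (Fin 4) (Fin 4) ℂ)
    + ((θ : ℂ) * ((bracket m ξ : ℝ) : ℂ)⁻¹) • diracSym m ξ)

/-- The propagator symbol Uₘ(t,ξ) = cos(t⟨ξ⟩ₘ)·I₄ − i⟨ξ⟩ₘ⁻¹ sin(t⟨ξ⟩ₘ)·(ξ·α + mβ). -/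
def Uprop (m t : ℝ) (ξ : E3) : Matrix (Fin 4) (Fin 4) ℂ :=
  ((Real.cos (t * bracket m ξ) : ℝ) : ℂ) • (1 : Matrix (Fin 4) (Fin 4) ℂ) -
    (Complex.I * ((bracket m ξ : ℝ) : ℂ)⁻¹ * ((Real.sin (t * bracket m ξ) : ℝ) : ℂ))
      • diracSym m ξ

/-- The standard Hermitian inner product ⟨v,w⟩_{ℂ⁴} = Σⱼ conj(vⱼ)·wⱼ. -/
def cinner (v w : Fin 4 → ℂ) : ℂ := ∑ j, starRingEnd ℂ (v j) * w j

/-- The Hermitian norm |v| = (Σⱼ |vⱼ|²)^(1/2) on ℂ⁴. -/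
def cnorm (v : Fin 4 → ℂ) : ℝ := Real.sqrt (∑ j, ‖v j‖ ^ 2)

/-!
Π_θ(ξ) is a self-adjoint projection with Π_θ(ξ) Π_{-θ}(ξ) = 0, and β Π_θ(η) = Π_θ(-η) β. Hence
Π_{θ₁}(ξ) β Π_{θ₂}(η) = Π_{θ₁}(ξ) (Π_{θ₂}(-η) - Π_{-θ₁}(ξ)) β, and the difference of projections is
½(ζ·α + cβ) with ζ = θ₁ξ/⟨ξ⟩ₘ - θ₂η/⟨η⟩ₘ and c = m(θ₁/⟨ξ⟩ₘ + θ₂/⟨η⟩ₘ). As (ζ·α + cβ)² = ⟨ζ⟩_c², the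
C*-identity gives it operator norm ⟨ζ⟩_c ≤ |c| + |ζ|. Both terms are O(δ):
|c| ≤ |m|(r₁⁻¹ + r₂⁻¹), and since ⟨rω⟩ₘ - r ≤ |m|, ζ differs from θ₁ω - θ₂ω′ by at most
|m|(r₁⁻¹ + r₂⁻¹).
-/

open Finset in
theorem sum_smul_mul_self_of_anticomm {ι R A : Type*} [Fintype ι] [DecidableEq ι] [CommRing R]
    [Ring A] [Algebra R A] (c : ι → R) (γ : ι → A) (hsq : ∀ i, γ i * γ i = 1)
    (hanti : ∀ i j, i ≠ j → γ i * γ j = -(γ j * γ i)) :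
    (∑ i, c i • γ i) * (∑ i, c i • γ i) = (∑ i, c i ^ 2) • 1 := by
  have hoff : ∑ p ∈ (univ : Finset ι).offDiag, (c p.1 • γ p.1) * (c p.2 • γ p.2) = 0 := by
    refine sum_involution (fun p _ => p.swap) (fun p hp => ?_) (fun p hp _ => ?_)
      (fun p hp => by simpa [and_comm, eq_comm] using hp) (fun p _ => Prod.swap_swap p)
    · simp only [Prod.fst_swap, Prod.snd_swap, smul_mul_smul_comm, mul_comm (c p.2)]
      rw [hanti p.1 p.2 (mem_offDiag.1 hp).2.2, smul_neg, neg_add_cancel]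
    · exact fun h => (mem_offDiag.1 hp).2.2 (Prod.ext_iff.1 h).1.symm
  rw [sum_mul_sum, ← sum_product', ← diag_union_offDiag, sum_union (disjoint_diag_offDiag _),
    hoff, add_zero, sum_diag, sum_smul]
  simp only [smul_mul_smul_comm, hsq, sq]

theorem norm_smul_of_norm_eq_one {V : Type*} [SeminormedAddCommGroup V] [NormedSpace ℝ V]
    {ω : V} (hω : ‖ω‖ = 1) {r : ℝ} (hr : 0 ≤ r) : ‖r • ω‖ = r := by
  rw [norm_smul_of_nonneg hr, hω, mul_one]

theorem norm_smul_sub_smul_le {V : Type*} [SeminormedAddCommGroup V] [NormedSpace ℝ V]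
    (a b : ℝ) (x y : V) :
    ‖a • x - b • y‖ ≤ ‖x - y‖ + |1 - a| * ‖x‖ + |1 - b| * ‖y‖ := by
  have h : a • x - b • y = (x - y) - ((1 - a) • x - (1 - b) • y) := by module
  calc ‖a • x - b • y‖ ≤ ‖x - y‖ + (‖(1 - a) • x‖ + ‖(1 - b) • y‖) := by
        rw [h]; exact (norm_sub_le _ _).trans (by gcongr; exact norm_sub_le _ _)
    _ = ‖x - y‖ + |1 - a| * ‖x‖ + |1 - b| * ‖y‖ := by
        rw [norm_smul, norm_smul, Real.norm_eq_abs, Real.norm_eq_abs, add_assoc]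

theorem bracket_sq (m : ℝ) (ξ : E3) : bracket m ξ ^ 2 = m ^ 2 + ‖ξ‖ ^ 2 :=
  Real.sq_sqrt (by positivity)

theorem bracket_neg (m : ℝ) (ξ : E3) : bracket m (-ξ) = bracket m ξ := by
  simp [bracket]

theorem norm_le_bracket (m : ℝ) (ξ : E3) : ‖ξ‖ ≤ bracket m ξ :=
  Real.le_sqrt_of_sq_le (le_add_of_nonneg_left (sq_nonneg m))

theorem bracket_le_abs_add_norm (m : ℝ) (ξ : E3) : bracket m ξ ≤ |m| + ‖ξ‖ :=
  Real.sqrt_le_iff.2 ⟨by positivity, by nlinarith [sq_abs m, abs_nonneg m, norm_nonneg ξ]⟩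

section DiracAlgebra

theorem diracAlpha_mul_self (j : Fin 3) : diracAlpha j * diracAlpha j = 1 := by
  fin_cases j <;> ext a b <;> fin_cases a <;> fin_cases b <;>
    simp [diracAlpha, Matrix.mul_apply, Fin.sum_univ_four]

theorem diracAlpha_mul_diracAlpha_of_ne {j k : Fin 3} (hjk : j ≠ k) :
    diracAlpha j * diracAlpha k = -(diracAlpha k * diracAlpha j) := by
  fin_cases j <;> fin_cases k <;> first
    | exact absurd rfl hjk
    | ext a b; fin_cases a <;> fin_cases b <;>
        simp [diracAlpha, Matrix.mul_apply, Fin.sum_univ_four]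

theorem diracBeta_mul_diracAlpha (j : Fin 3) :
    diracBeta * diracAlpha j = -(diracAlpha j * diracBeta) := by
  fin_cases j <;> ext a b <;> fin_cases a <;> fin_cases b <;>
    simp [diracAlpha, diracBeta, Matrix.mul_apply, Fin.sum_univ_four]

theorem diracBeta_mul_self : diracBeta * diracBeta = 1 := by
  ext a b; fin_cases a <;> fin_cases b <;>
    simp [diracBeta, Matrix.mul_apply, Fin.sum_univ_four]

theorem isSelfAdjoint_diracAlpha (j : Fin 3) : IsSelfAdjoint (diracAlpha j) := by
  fin_cases j <;> ext a b <;> fin_cases a <;> fin_cases b <;> simp [diracAlpha]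

theorem isSelfAdjoint_diracBeta : IsSelfAdjoint diracBeta := by
  ext a b; fin_cases a <;> fin_cases b <;> simp [diracBeta]

theorem xiAlpha_mul_self (ξ : E3) : xiAlpha ξ * xiAlpha ξ = ‖ξ‖ ^ 2 • 1 := by
  rw [xiAlpha, sum_smul_mul_self_of_anticomm _ _ diracAlpha_mul_self
    (fun _ _ => diracAlpha_mul_diracAlpha_of_ne), EuclideanSpace.norm_sq_eq, ← Complex.coe_smul]
  simp

theorem diracBeta_mul_xiAlpha (ξ : E3) : diracBeta * xiAlpha ξ = -(xiAlpha ξ * diracBeta) := by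
  simp only [xiAlpha, Finset.mul_sum, Finset.sum_mul, ← Finset.sum_neg_distrib, mul_smul_comm,
    smul_mul_assoc, diracBeta_mul_diracAlpha, smul_neg]

theorem xiAlpha_add (ξ η : E3) : xiAlpha (ξ + η) = xiAlpha ξ + xiAlpha η := by
  simp [xiAlpha, add_smul, Finset.sum_add_distrib]

theorem xiAlpha_smul (t : ℝ) (ξ : E3) : xiAlpha (t • ξ) = t • xiAlpha ξ := by
  simp [xiAlpha, Finset.smul_sum, smul_smul, ← Complex.coe_smul]

theorem xiAlpha_neg (ξ : E3) : xiAlpha (-ξ) = -xiAlpha ξ := by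
  simp [xiAlpha, Finset.sum_neg_distrib]

theorem isSelfAdjoint_diracSym (m : ℝ) (ξ : E3) : IsSelfAdjoint (diracSym m ξ) := by
  simp only [diracSym, xiAlpha, Complex.coe_smul]
  exact (isSelfAdjoint_sum _ fun j _ =>
    (IsSelfAdjoint.all (ξ j)).smul (isSelfAdjoint_diracAlpha j)).add
      ((IsSelfAdjoint.all m).smul isSelfAdjoint_diracBeta)

theorem diracSym_mul_self (m : ℝ) (ξ : E3) :
    diracSym m ξ * diracSym m ξ = bracket m ξ ^ 2 • 1 := by
  simp only [diracSym, add_mul, mul_add, mul_smul_comm, smul_mul_assoc, xiAlpha_mul_self,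
    diracBeta_mul_self, diracBeta_mul_xiAlpha, bracket_sq, ← Complex.coe_smul]
  module

theorem diracBeta_mul_diracSym (m : ℝ) (ξ : E3) :
    diracBeta * diracSym m ξ = diracSym m (-ξ) * diracBeta := by
  rw [diracSym, diracSym, xiAlpha_neg, mul_add, add_mul, diracBeta_mul_xiAlpha, neg_mul,
    mul_smul_comm, smul_mul_assoc]

theorem smul_diracSym_add_smul_diracSym (m a b : ℝ) (ξ η : E3) :
    a • diracSym m ξ + b • diracSym m η = diracSym (m * (a + b)) (a • ξ + b • η) := by
  simp only [diracSym, xiAlpha_add, xiAlpha_smul, ← Complex.coe_smul]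
  push_cast
  module

end DiracAlgebra

section Projections

theorem proj_eq_smul (m θ : ℝ) (ξ : E3) :
    proj m θ ξ = (2⁻¹ : ℝ) • (1 + (θ / bracket m ξ) • diracSym m ξ) := by
  simp only [proj, ← Complex.coe_smul]
  push_cast
  rw [one_div, div_eq_mul_inv]

variable {m θ : ℝ} {ξ : E3}

theorem div_bracket_smul_diracSym_mul_self (hθ : |θ| = 1) (hb : bracket m ξ ≠ 0) :
    (θ / bracket m ξ) • diracSym m ξ * (θ / bracket m ξ) • diracSym m ξ = 1 := by
  have hθb : θ / bracket m ξ * (θ / bracket m ξ) * bracket m ξ ^ 2 = 1 := by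
    field_simp; nlinarith [sq_abs θ]
  rw [smul_mul_smul_comm, diracSym_mul_self, smul_smul, hθb, one_smul]

theorem isStarProjection_proj (hθ : |θ| = 1) (hb : bracket m ξ ≠ 0) :
    IsStarProjection (proj m θ ξ) := by
  rw [proj_eq_smul]
  refine ⟨?_, (IsSelfAdjoint.all _).smul
    ((IsSelfAdjoint.one _).add ((IsSelfAdjoint.all _).smul (isSelfAdjoint_diracSym m ξ)))⟩
  have h := div_bracket_smul_diracSym_mul_self hθ hb
  simp only [IsIdempotentElem, smul_mul_smul_comm, add_mul, mul_add, one_mul, mul_one, h]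
  module

theorem proj_mul_proj_neg (hθ : |θ| = 1) (hb : bracket m ξ ≠ 0) :
    proj m θ ξ * proj m (-θ) ξ = 0 := by
  have h := div_bracket_smul_diracSym_mul_self hθ hb
  simp only [proj_eq_smul, neg_div, neg_smul, smul_mul_smul_comm, add_mul, mul_add, one_mul,
    mul_one, mul_neg, h]
  module

theorem diracBeta_mul_proj (m θ : ℝ) (ξ : E3) :
    diracBeta * proj m θ ξ = proj m θ (-ξ) * diracBeta := by
  simp only [proj_eq_smul, bracket_neg, mul_smul_comm, smul_mul_assoc, mul_add, add_mul, one_mul,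
    mul_one, diracBeta_mul_diracSym]

theorem proj_sub_proj (m θ₁ θ₂ : ℝ) (ξ η : E3) :
    proj m θ₂ (-η) - proj m (-θ₁) ξ =
      (2⁻¹ : ℝ) • diracSym (m * (θ₁ / bracket m ξ + θ₂ / bracket m η))
        ((θ₁ / bracket m ξ) • ξ - (θ₂ / bracket m η) • η) := by
  rw [proj_eq_smul, proj_eq_smul, bracket_neg, ← smul_sub, add_sub_add_left_eq_sub, neg_div,
    neg_smul, sub_neg_eq_add, add_comm, smul_diracSym_add_smul_diracSym, sub_eq_add_neg,
    ← smul_neg, add_comm (θ₁ / _)]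

theorem proj_mul_diracBeta_mul_proj (θ₂ : ℝ) (η : E3) (hθ : |θ| = 1) (hb : bracket m ξ ≠ 0) :
    proj m θ ξ * (diracBeta * proj m θ₂ η) =
      proj m θ ξ * (proj m θ₂ (-η) - proj m (-θ) ξ) * diracBeta := by
  rw [diracBeta_mul_proj, mul_sub, sub_mul, proj_mul_proj_neg hθ hb, zero_mul, sub_zero,
    mul_assoc]

end Projections

theorem cnorm_nonneg (v : Fin 4 → ℂ) : 0 ≤ cnorm v := Real.sqrt_nonneg _

theorem cnorm_eq_norm (v : Fin 4 → ℂ) : cnorm v = ‖WithLp.toLp 2 v‖ := by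
  rw [cnorm, EuclideanSpace.norm_eq]

theorem cinner_eq_star_dotProduct (v w : Fin 4 → ℂ) : cinner v w = star v ⬝ᵥ w := rfl

theorem norm_cinner_le (v w : Fin 4 → ℂ) : ‖cinner v w‖ ≤ cnorm v * cnorm w := by
  have h : cinner v w = inner ℂ (WithLp.toLp 2 v) (WithLp.toLp 2 w) := by
    rw [EuclideanSpace.inner_eq_star_dotProduct, dotProduct_comm, cinner_eq_star_dotProduct]
  rw [h, cnorm_eq_norm, cnorm_eq_norm]
  exact norm_inner_le_norm _ _

section Norms

open scoped Matrix.Norms.L2Operator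

theorem norm_diracSym (m : ℝ) (ξ : E3) : ‖diracSym m ξ‖ = bracket m ξ := by
  have h := (isSelfAdjoint_diracSym m ξ).norm_mul_self
  rw [diracSym_mul_self, norm_smul, CStarRing.norm_one, mul_one, Real.norm_eq_abs,
    abs_of_nonneg (by positivity)] at h
  exact (sq_eq_sq₀ (norm_nonneg _) (Real.sqrt_nonneg _)).1 h.symm

theorem norm_diracBeta : ‖diracBeta‖ = 1 :=
  CStarRing.norm_of_mem_unitary <| Unitary.mem_iff.2
    ⟨by rw [isSelfAdjoint_diracBeta.star_eq, diracBeta_mul_self],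
     by rw [isSelfAdjoint_diracBeta.star_eq, diracBeta_mul_self]⟩

theorem norm_proj_mul_diracBeta_mul_proj_le {m θ₁ : ℝ} {ξ : E3} (θ₂ : ℝ) (η : E3)
    (hθ₁ : |θ₁| = 1) (hb : bracket m ξ ≠ 0) :
    ‖proj m θ₁ ξ * (diracBeta * proj m θ₂ η)‖ ≤
      bracket (m * (θ₁ / bracket m ξ + θ₂ / bracket m η))
        ((θ₁ / bracket m ξ) • ξ - (θ₂ / bracket m η) • η) / 2 := by
  rw [proj_mul_diracBeta_mul_proj θ₂ η hθ₁ hb, proj_sub_proj]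
  calc _ ≤ ‖proj m θ₁ ξ‖ * ‖(2⁻¹ : ℝ) • diracSym _ _‖ * ‖diracBeta‖ :=
        (norm_mul_le _ _).trans (by gcongr; exact norm_mul_le _ _)
    _ ≤ 1 * ‖(2⁻¹ : ℝ) • diracSym _ _‖ * 1 := by
        gcongr
        exacts [(isStarProjection_proj hθ₁ hb).norm_le, norm_diracBeta.le]
    _ = _ := by rw [norm_smul, norm_diracSym]; norm_num; ring

theorem cnorm_mulVec_le (A : Matrix (Fin 4) (Fin 4) ℂ) (v : Fin 4 → ℂ) :
    cnorm (A *ᵥ v) ≤ ‖A‖ * cnorm v := by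
  rw [cnorm_eq_norm, cnorm_eq_norm]
  exact A.l2_opNorm_mulVec (WithLp.toLp 2 v)

theorem norm_cinner_mulVec_mulVec_le (A B : Matrix (Fin 4) (Fin 4) ℂ) (v w : Fin 4 → ℂ) :
    ‖cinner (A *ᵥ v) (B *ᵥ w)‖ ≤ ‖Aᴴ * B‖ * cnorm v * cnorm w := by
  have h : cinner (A *ᵥ v) (B *ᵥ w) = cinner v ((Aᴴ * B) *ᵥ w) := by
    rw [cinner_eq_star_dotProduct, cinner_eq_star_dotProduct, star_mulVec, ← dotProduct_mulVec,
      mulVec_mulVec]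
  rw [h, mul_comm ‖_‖, mul_assoc]
  exact (norm_cinner_le _ _).trans
    (mul_le_mul_of_nonneg_left (cnorm_mulVec_le _ _) (cnorm_nonneg _))

theorem norm_cinner_proj_diracBeta_proj_le {m θ₁ : ℝ} {ξ : E3} (θ₂ : ℝ) (η : E3)
    (hθ₁ : |θ₁| = 1) (hb : bracket m ξ ≠ 0) (v w : Fin 4 → ℂ) :
    ‖cinner (proj m θ₁ ξ *ᵥ v) ((diracBeta * proj m θ₂ η) *ᵥ w)‖ ≤
      bracket (m * (θ₁ / bracket m ξ + θ₂ / bracket m η))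
        ((θ₁ / bracket m ξ) • ξ - (θ₂ / bracket m η) • η) / 2 * cnorm v * cnorm w := by
  refine (norm_cinner_mulVec_mulVec_le _ _ _ _).trans ?_
  rw [← star_eq_conjTranspose, (isStarProjection_proj hθ₁ hb).isSelfAdjoint.star_eq]
  have := cnorm_nonneg v
  have := cnorm_nonneg w
  gcongr
  exact norm_proj_mul_diracBeta_mul_proj_le θ₂ η hθ₁ hb

end Norms

section Estimates

theorem abs_div_bracket_le (m : ℝ) {θ : ℝ} {ξ : E3} (hθ : |θ| = 1) (hξ : ξ ≠ 0) :
    |θ / bracket m ξ| ≤ ‖ξ‖⁻¹ := by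
  have hr : 0 < ‖ξ‖ := norm_pos_iff.2 hξ
  rw [abs_div, hθ, abs_of_pos (hr.trans_le (norm_le_bracket m ξ)), one_div]
  exact inv_anti₀ hr (norm_le_bracket m ξ)

theorem abs_one_sub_norm_div_bracket_le (m : ℝ) {ξ : E3} (hξ : ξ ≠ 0) :
    |1 - ‖ξ‖ / bracket m ξ| ≤ |m| / ‖ξ‖ := by
  have hr : 0 < ‖ξ‖ := norm_pos_iff.2 hξ
  have hb : 0 < bracket m ξ := hr.trans_le (norm_le_bracket m ξ)
  rw [abs_of_nonneg (sub_nonneg.2 ((div_le_one hb).2 (norm_le_bracket m ξ))), one_sub_div hb.ne']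
  calc (bracket m ξ - ‖ξ‖) / bracket m ξ ≤ |m| / bracket m ξ := by
        gcongr; linarith [bracket_le_abs_add_norm m ξ]
    _ ≤ |m| / ‖ξ‖ := by gcongr; exact norm_le_bracket m ξ

theorem abs_mul_div_bracket_add_div_bracket_le (m : ℝ) {θ₁ θ₂ : ℝ} {ξ η : E3} (hθ₁ : |θ₁| = 1)
    (hθ₂ : |θ₂| = 1) (hξ : ξ ≠ 0) (hη : η ≠ 0) :
    |m * (θ₁ / bracket m ξ + θ₂ / bracket m η)| ≤ |m| * (‖ξ‖⁻¹ + ‖η‖⁻¹) := by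
  rw [abs_mul]
  gcongr
  exact (abs_add_le _ _).trans
    (add_le_add (abs_div_bracket_le m hθ₁ hξ) (abs_div_bracket_le m hθ₂ hη))

theorem norm_div_bracket_smul_sub_le (m : ℝ) {θ₁ θ₂ : ℝ} {ω ω' : E3} (hθ₁ : |θ₁| = 1)
    (hθ₂ : |θ₂| = 1) (hω : ‖ω‖ = 1) (hω' : ‖ω'‖ = 1) {r₁ r₂ : ℝ} (hr₁ : 0 < r₁) (hr₂ : 0 < r₂) :
    ‖(θ₁ / bracket m (r₁ • ω)) • (r₁ • ω) - (θ₂ / bracket m (r₂ • ω')) • (r₂ • ω')‖ ≤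
      ‖θ₁ • ω - θ₂ • ω'‖ + |m| * (r₁⁻¹ + r₂⁻¹) := by
  have key : ∀ {θ r : ℝ} {ω : E3}, |θ| = 1 → ‖ω‖ = 1 → 0 < r →
      (θ / bracket m (r • ω)) • (r • ω) = (r / bracket m (r • ω)) • (θ • ω) ∧
        |1 - r / bracket m (r • ω)| * ‖θ • ω‖ ≤ |m| * r⁻¹ := by
    intro θ r ω hθ hω hr
    have hrω : ‖r • ω‖ = r := norm_smul_of_norm_eq_one hω hr.le
    have h := abs_one_sub_norm_div_bracket_le m (norm_pos_iff.1 (hrω.ge.trans_lt' hr))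
    rw [hrω] at h
    refine ⟨by rw [smul_smul, smul_smul]; ring_nf, ?_⟩
    rw [norm_smul θ ω, hω, Real.norm_eq_abs, hθ, mul_one, mul_one]
    exact h.trans_eq (div_eq_mul_inv _ _)
  obtain ⟨h₁, e₁⟩ := key hθ₁ hω hr₁
  obtain ⟨h₂, e₂⟩ := key hθ₂ hω' hr₂
  rw [h₁, h₂]
  linarith [norm_smul_sub_smul_le (r₁ / bracket m (r₁ • ω)) (r₂ / bracket m (r₂ • ω'))
    (θ₁ • ω) (θ₂ • ω')]

end Estimates

theorem null_structure_estimate_general (m : ℝ) :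
    ∃ C > 0, ∀ θ₁ θ₂ : ℝ, (θ₁ = 1 ∨ θ₁ = -1) → (θ₂ = 1 ∨ θ₂ = -1) →
      ∀ ω ω' : E3, ‖ω‖ = 1 → ‖ω'‖ = 1 →
      ∀ r₁ r₂ : ℝ, 0 < r₁ → 0 < r₂ → (0 < m → 1 ≤ r₁ ∧ 1 ≤ r₂) →
      ∀ δ : ℝ, 0 < δ → ‖θ₁ • ω - θ₂ • ω'‖ ≤ δ →
        r₁⁻¹ ≤ 2 ^ 10 * δ → r₂⁻¹ ≤ 2 ^ 10 * δ →
      ∀ v w : Fin 4 → ℂ,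
        ‖cinner ((proj m θ₁ (r₁ • ω)).mulVec v)
            ((diracBeta * proj m θ₂ (r₂ • ω')).mulVec w)‖
          ≤ C * δ * cnorm v * cnorm w := by
  refine ⟨1 + 2 ^ 11 * |m|, by positivity, ?_⟩
  intro θ₁ θ₂ hθ₁ hθ₂ ω ω' hω hω' r₁ r₂ hr₁ hr₂ _ δ _ hδ hr₁δ hr₂δ v w
  have habs₁ : |θ₁| = 1 := (abs_eq zero_le_one).2 hθ₁
  have habs₂ : |θ₂| = 1 := (abs_eq zero_le_one).2 hθ₂
  have hξ := norm_smul_of_norm_eq_one hω hr₁.le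
  have hη := norm_smul_of_norm_eq_one hω' hr₂.le
  have hb : bracket m (r₁ • ω) ≠ 0 := (hr₁.trans_le (hξ.ge.trans (norm_le_bracket m _))).ne'
  have hmass := abs_mul_div_bracket_add_div_bracket_le m habs₁ habs₂
    (norm_pos_iff.1 (hξ ▸ hr₁)) (norm_pos_iff.1 (hη ▸ hr₂))
  rw [hξ, hη] at hmass
  have hdir := norm_div_bracket_smul_sub_le m habs₁ habs₂ hω hω' hr₁ hr₂
  have hinv : |m| * (r₁⁻¹ + r₂⁻¹) ≤ |m| * (2 ^ 11 * δ) := by gcongr; linarith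
  have := cnorm_nonneg v
  have := cnorm_nonneg w
  refine (norm_cinner_proj_diracBeta_proj_le θ₂ _ habs₁ hb v w).trans ?_
  gcongr
  calc _ ≤ (|m| * (r₁⁻¹ + r₂⁻¹) + (δ + |m| * (r₁⁻¹ + r₂⁻¹))) / 2 := by
        gcongr
        exact (bracket_le_abs_add_norm _ _).trans (add_le_add hmass (hdir.trans (by gcongr)))
    _ ≤ (1 + 2 ^ 11 * |m|) * δ := by linarith [(norm_nonneg _).trans hδ]

/-- the null-structure estimate
|⟨Π_{θ₁}ᵐ(r₁ω) v, β Π_{θ₂}ᵐ(r₂ω′) w⟩| ≤ C δ |v||w|. -/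
theorem null_structure_estimate (m : ℝ) (hm : 0 ≤ m) :
    ∃ C > 0, ∀ θ₁ θ₂ : ℝ, (θ₁ = 1 ∨ θ₁ = -1) → (θ₂ = 1 ∨ θ₂ = -1) →
      ∀ ω ω' : E3, ‖ω‖ = 1 → ‖ω'‖ = 1 →
      ∀ r₁ r₂ : ℝ, 0 < r₁ → 0 < r₂ → (0 < m → 1 ≤ r₁ ∧ 1 ≤ r₂) →
      ∀ δ : ℝ, 0 < δ → ‖θ₁ • ω - θ₂ • ω'‖ ≤ δ →
        r₁⁻¹ ≤ 2 ^ 10 * δ → r₂⁻¹ ≤ 2 ^ 10 * δ →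
      ∀ v w : Fin 4 → ℂ,
        ‖cinner ((proj m θ₁ (r₁ • ω)).mulVec v)
            ((diracBeta * proj m θ₂ (r₂ • ω')).mulVec w)‖
          ≤ C * δ * cnorm v * cnorm w :=
  null_structure_estimate_general m
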